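/- Two normal-play combinatorial games g and h are equivalent (g + x and h + x have the same outcome class for every game x) if and only if g + (−h) is a second-player win (lies in outcome class P). -/

import Mathlib

universe u

namespace SetTheory

/-- Pre-games, as in Mathlib of December 2024 (`SetTheory.PGame`, since removed from Mathlib). -/
inductive PGame : Type (u + 1)
  | mk : ∀ α β : Type u, (α → PGame) → (β → PGame) → PGame

namespace PGame

/-- The pair (`x ≤ y`, `x ⧏ y`), defined by simultaneous recursion as in old Mathlib. -/
noncomputable def leLf (x : PGame.{u}) : PGame.{u} → Prop × Prop :=
  PGame.rec (motive := fun _ => PGame.{u} → Prop × Prop)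
    (fun xl xr xL xR IHxl IHxr y =>
      PGame.rec (motive := fun _ => Prop × Prop)
        (fun yl yr yL yR IHyl IHyr =>
          ((∀ i, (IHxl i (mk yl yr yL yR)).2) ∧ ∀ j, (IHyr j).2,
           (∃ i, (IHyl i).1) ∨ ∃ j, (IHxr j (mk yl yr yL yR)).1)) y) x

instance : LE PGame.{u} := ⟨fun x y => (leLf x y).1⟩

/-- Game equivalence `x ≤ y ∧ y ≤ x`. -/
def Equiv (x y : PGame.{u}) : Prop := x ≤ y ∧ y ≤ x

instance : HasEquiv PGame.{u} := ⟨Equiv⟩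

/-- The zero game `{ | }`. -/
instance : Zero PGame.{u} := ⟨mk PEmpty PEmpty PEmpty.elim PEmpty.elim⟩

/-- Negation: swap the roles of the players. -/
noncomputable def neg (x : PGame.{u}) : PGame.{u} :=
  PGame.rec (motive := fun _ => PGame.{u})
    (fun xl xr _ _ IHl IHr => mk xr xl IHr IHl) x

noncomputable instance : Neg PGame.{u} := ⟨neg⟩

/-- Disjunctive sum of games. -/
noncomputable def add (x : PGame.{u}) : PGame.{u} → PGame.{u} :=
  PGame.rec (motive := fun _ => PGame.{u} → PGame.{u})
    (fun xl xr _ _ IHxl IHxr y =>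
      PGame.rec (motive := fun _ => PGame.{u})
        (fun yl yr yL yR IHyl IHyr =>
          mk (xl ⊕ yl) (xr ⊕ yr) (Sum.elim (fun i => IHxl i (mk yl yr yL yR)) IHyl)
            (Sum.elim (fun i => IHxr i (mk yl yr yL yR)) IHyr)) y) x

noncomputable instance : Add PGame.{u} := ⟨add⟩

end PGame

end SetTheory

open SetTheory PGame

/-! The order on pregames is a preorder compatible with addition, and `x + -x ≈ 0` because the
second player can mirror every move in the other component. Hence `g + -h ≈ 0` forces `g ≈ h`,
and equivalent games can be exchanged inside any sum without changing its outcome. Conversely,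
taking `x = -h` in the hypothesis transfers `h + -h ≈ 0` to `g + -h ≈ 0`. -/

namespace SetTheory.PGame

def LeftMoves : PGame.{u} → Type u
  | mk l _ _ _ => l

def RightMoves : PGame.{u} → Type u
  | mk _ r _ _ => r

def moveLeft : (x : PGame.{u}) → LeftMoves x → PGame.{u}
  | mk _ _ L _ => L

def moveRight : (x : PGame.{u}) → RightMoves x → PGame.{u}
  | mk _ _ _ R => R

theorem leLf_snd_iff_not_fst (x y : PGame.{u}) :
    ((leLf x y).2 ↔ ¬ (leLf y x).1) ∧ ((leLf y x).2 ↔ ¬ (leLf x y).1) := by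
  induction x generalizing y with
  | mk xl xr xL xR IHxl IHxr =>
    induction y with
    | mk yl yr yL yR IHyl IHyr =>
      constructor
      · change ((∃ i, (leLf (mk xl xr xL xR) (yL i)).1) ∨ ∃ j, (leLf (xR j) (mk yl yr yL yR)).1) ↔
          ¬ ((∀ i, (leLf (yL i) (mk xl xr xL xR)).2) ∧ ∀ j, (leLf (mk yl yr yL yR) (xR j)).2)
        rw [not_and_or, not_forall, not_forall]
        exact or_congr (exists_congr fun i => by rw [(IHyl i).2, not_not])
          (exists_congr fun j => by rw [(IHxr j (mk yl yr yL yR)).2, not_not])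
      · change ((∃ i, (leLf (mk yl yr yL yR) (xL i)).1) ∨ ∃ j, (leLf (yR j) (mk xl xr xL xR)).1) ↔
          ¬ ((∀ i, (leLf (xL i) (mk yl yr yL yR)).2) ∧ ∀ j, (leLf (mk xl xr xL xR) (yR j)).2)
        rw [not_and_or, not_forall, not_forall]
        exact or_congr (exists_congr fun i => by rw [(IHxl i (mk yl yr yL yR)).1, not_not])
          (exists_congr fun j => by rw [(IHyr j).1, not_not])

theorem mk_le_mk {xl xr yl yr : Type u} {xL : xl → PGame.{u}} {xR : xr → PGame.{u}}
    {yL : yl → PGame.{u}} {yR : yr → PGame.{u}} :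
    mk xl xr xL xR ≤ mk yl yr yL yR ↔
      (∀ i, ¬ mk yl yr yL yR ≤ xL i) ∧ ∀ j, ¬ yR j ≤ mk xl xr xL xR :=
  and_congr (forall_congr' fun i => (leLf_snd_iff_not_fst (xL i) _).1)
    (forall_congr' fun j => (leLf_snd_iff_not_fst (mk xl xr xL xR) (yR j)).1)

theorem le_def (x y : PGame.{u}) :
    x ≤ y ↔ (∀ i, ¬ y ≤ x.moveLeft i) ∧ ∀ j, ¬ y.moveRight j ≤ x := by
  cases x; cases y; exact mk_le_mk

theorem not_le_iff (x y : PGame.{u}) :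
    ¬ x ≤ y ↔ (∃ i, y ≤ x.moveLeft i) ∨ ∃ j, y.moveRight j ≤ x := by
  rw [le_def, not_and_or]
  simp only [not_forall, not_not]

protected theorem le_refl (x : PGame.{u}) : x ≤ x := by
  induction x with
  | mk xl xr xL xR IHl IHr =>
    exact mk_le_mk.2 ⟨fun i h => ((le_def _ _).1 h).1 i (IHl i),
      fun j h => ((le_def _ _).1 h).2 j (IHr j)⟩

theorem le_trans_of_options {x y z : PGame.{u}}
    (hL : ∀ i, y ≤ z → z ≤ x.moveLeft i → y ≤ x.moveLeft i)
    (hR : ∀ j, z.moveRight j ≤ x → x ≤ y → z.moveRight j ≤ y) (hxy : x ≤ y) (hyz : y ≤ z) :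
    x ≤ z :=
  (le_def x z).2 ⟨fun i h => ((le_def x y).1 hxy).1 i (hL i hyz h),
    fun j h => ((le_def y z).1 hyz).2 j (hR j h hxy)⟩

/-- The three rotations are proved together because each one needs the others on options. -/
theorem le_trans_rotations (x y z : PGame.{u}) :
    (x ≤ y → y ≤ z → x ≤ z) ∧ (y ≤ z → z ≤ x → y ≤ x) ∧ (z ≤ x → x ≤ y → z ≤ y) := by
  induction x generalizing y z with
  | mk xl xr xL xR IHxl IHxr =>
    induction y generalizing z with
    | mk yl yr yL yR IHyl IHyr =>
      induction z with
      | mk zl zr zL zR IHzl IHzr =>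
        exact ⟨le_trans_of_options (fun i => (IHxl i _ _).2.1) (fun j => (IHzr j).2.2),
          le_trans_of_options (fun i => (IHyl i _).2.2) (fun j => (IHxr j _ _).1),
          le_trans_of_options (fun i => (IHzl i).1) (fun j => (IHyr j _).2.1)⟩

instance : Preorder PGame.{u} where
  le_refl := PGame.le_refl
  le_trans x y z := (le_trans_rotations x y z).1

theorem not_le_moveLeft (x : PGame.{u}) (i : LeftMoves x) : ¬ x ≤ x.moveLeft i :=
  fun h => ((le_def _ _).1 h).1 i le_rfl

theorem not_moveRight_le (x : PGame.{u}) (j : RightMoves x) : ¬ x.moveRight j ≤ x :=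
  fun h => ((le_def _ _).1 h).2 j le_rfl

theorem not_le_of_le_moveLeft {x y : PGame.{u}} {i : LeftMoves x} (h : y ≤ x.moveLeft i) :
    ¬ x ≤ y :=
  fun h' => not_le_moveLeft x i (h'.trans h)

theorem not_le_of_moveRight_le {x y : PGame.{u}} {j : RightMoves x} (h : x.moveRight j ≤ y) :
    ¬ y ≤ x :=
  fun h' => not_moveRight_le x j (h.trans h')

theorem mk_le_mk_of_forall_exists_le {xl xr yl yr : Type u} {xL : xl → PGame.{u}}
    {xR : xr → PGame.{u}} {yL : yl → PGame.{u}} {yR : yr → PGame.{u}}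
    (hL : ∀ i, ∃ i', xL i ≤ yL i') (hR : ∀ j, ∃ j', xR j' ≤ yR j) :
    mk xl xr xL xR ≤ mk yl yr yL yR :=
  mk_le_mk.2
    ⟨fun i h => let ⟨i', hi⟩ := hL i; not_le_of_le_moveLeft (x := mk yl yr yL yR) (i := i') hi h,
      fun j h => let ⟨j', hj⟩ := hR j; not_le_of_moveRight_le (x := mk xl xr xL xR) (j := j') hj h⟩

instance : @Trans PGame.{u} PGame.{u} PGame.{u} (· ≈ ·) (· ≈ ·) (· ≈ ·) :=
  ⟨AntisymmRel.trans⟩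

theorem add_zero_equiv (x : PGame.{u}) : x + 0 ≈ x := by
  induction x with
  | mk xl xr xL xR IHl IHr =>
    refine ⟨mk_le_mk_of_forall_exists_le ?_ ?_, mk_le_mk_of_forall_exists_le ?_ ?_⟩
    · rintro (i | ⟨⟨⟩⟩)
      exact ⟨i, (IHl i).1⟩
    · exact fun j => ⟨Sum.inl j, (IHr j).1⟩
    · exact fun i => ⟨Sum.inl i, (IHl i).2⟩
    · rintro (j | ⟨⟨⟩⟩)
      exact ⟨j, (IHr j).2⟩

theorem add_comm_le (x y : PGame.{u}) : x + y ≤ y + x := by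
  induction x generalizing y with
  | mk xl xr xL xR IHxl IHxr =>
    induction y with
    | mk yl yr yL yR IHyl IHyr =>
      refine mk_le_mk_of_forall_exists_le ?_ ?_
      · rintro (i | i)
        · exact ⟨Sum.inr i, IHxl i (mk yl yr yL yR)⟩
        · exact ⟨Sum.inl i, IHyl i⟩
      · rintro (j | j)
        · exact ⟨Sum.inr j, IHyr j⟩
        · exact ⟨Sum.inl j, IHxr j (mk yl yr yL yR)⟩

theorem add_comm_equiv (x y : PGame.{u}) : x + y ≈ y + x :=
  ⟨add_comm_le x y, add_comm_le y x⟩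

theorem add_assoc_equiv (x y z : PGame.{u}) : x + y + z ≈ x + (y + z) := by
  induction x generalizing y z with
  | mk xl xr xL xR IHxl IHxr =>
    induction y generalizing z with
    | mk yl yr yL yR IHyl IHyr =>
      induction z with
      | mk zl zr zL zR IHzl IHzr =>
        refine ⟨mk_le_mk_of_forall_exists_le ?_ ?_, mk_le_mk_of_forall_exists_le ?_ ?_⟩
        · rintro ((i | i) | i)
          · exact ⟨Sum.inl i, (IHxl i (mk yl yr yL yR) (mk zl zr zL zR)).1⟩
          · exact ⟨Sum.inr (Sum.inl i), (IHyl i (mk zl zr zL zR)).1⟩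
          · exact ⟨Sum.inr (Sum.inr i), (IHzl i).1⟩
        · rintro (j | j | j)
          · exact ⟨Sum.inl (Sum.inl j), (IHxr j (mk yl yr yL yR) (mk zl zr zL zR)).1⟩
          · exact ⟨Sum.inl (Sum.inr j), (IHyr j (mk zl zr zL zR)).1⟩
          · exact ⟨Sum.inr j, (IHzr j).1⟩
        · rintro (i | i | i)
          · exact ⟨Sum.inl (Sum.inl i), (IHxl i (mk yl yr yL yR) (mk zl zr zL zR)).2⟩
          · exact ⟨Sum.inl (Sum.inr i), (IHyl i (mk zl zr zL zR)).2⟩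
          · exact ⟨Sum.inr i, (IHzl i).2⟩
        · rintro ((j | j) | j)
          · exact ⟨Sum.inl j, (IHxr j (mk yl yr yL yR) (mk zl zr zL zR)).2⟩
          · exact ⟨Sum.inr (Sum.inl j), (IHyr j (mk zl zr zL zR)).2⟩
          · exact ⟨Sum.inr (Sum.inr j), (IHzr j).2⟩

theorem add_le_add_left_and_not_le (x y z : PGame.{u}) :
    (y ≤ z → x + y ≤ x + z) ∧ (¬ z ≤ y → ¬ x + z ≤ x + y) := by
  induction x generalizing y z with
  | mk xl xr xL xR IHxl IHxr =>
    induction y generalizing z with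
    | mk yl yr yL yR IHyl IHyr =>
      induction z with
      | mk zl zr zL zR IHzl IHzr =>
        set X := mk xl xr xL xR
        set Y := mk yl yr yL yR
        set Z := mk zl zr zL zR
        constructor
        · intro h
          obtain ⟨hL, hR⟩ := mk_le_mk.1 h
          refine mk_le_mk.2 ⟨?_, ?_⟩
          · rintro (i | i)
            · exact not_le_of_le_moveLeft (x := X + Z) (i := Sum.inl i) ((IHxl i Y Z).1 h)
            · exact (IHyl i Z).2 (hL i)
          · rintro (j | j)
            · exact not_le_of_moveRight_le (x := X + Y) (j := Sum.inl j) ((IHxr j Y Z).1 h)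
            · exact (IHzr j).2 (hR j)
        · intro h
          rcases (not_le_iff Z Y).1 h with ⟨i, hi⟩ | ⟨j, hj⟩
          · exact not_le_of_le_moveLeft (x := X + Z) (i := Sum.inr i) ((IHzl i).1 hi)
          · exact not_le_of_moveRight_le (x := X + Y) (j := Sum.inr j) ((IHyr j Z).1 hj)

protected theorem add_le_add_left {y z : PGame.{u}} (h : y ≤ z) (x : PGame.{u}) :
    x + y ≤ x + z :=
  (add_le_add_left_and_not_le x y z).1 h

theorem not_add_le_add_left {y z : PGame.{u}} (h : ¬ z ≤ y) (x : PGame.{u}) :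
    ¬ x + z ≤ x + y :=
  (add_le_add_left_and_not_le x y z).2 h

protected theorem add_le_add_right {y z : PGame.{u}} (h : y ≤ z) (x : PGame.{u}) :
    y + x ≤ z + x :=
  calc y + x ≤ x + y := add_comm_le y x
    _ ≤ x + z := PGame.add_le_add_left h x
    _ ≤ z + x := add_comm_le x z

theorem not_add_le_add_right {y z : PGame.{u}} (h : ¬ z ≤ y) (x : PGame.{u}) :
    ¬ z + x ≤ y + x := fun h' =>
  not_add_le_add_left h x <| calc
    x + z ≤ z + x := add_comm_le x z
    _ ≤ y + x := h'
    _ ≤ x + y := add_comm_le y x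

theorem add_congr_left {x y : PGame.{u}} (h : x ≈ y) (z : PGame.{u}) : x + z ≈ y + z :=
  ⟨PGame.add_le_add_right h.1 z, PGame.add_le_add_right h.2 z⟩

theorem add_congr_right {x y : PGame.{u}} (h : x ≈ y) (z : PGame.{u}) : z + x ≈ z + y :=
  ⟨PGame.add_le_add_left h.1 z, PGame.add_le_add_left h.2 z⟩

/-- The mirror strategy: a move in one component is answered by the opposite move in the other. -/
theorem add_neg_equiv_zero (x : PGame.{u}) : x + -x ≈ 0 := by
  induction x with
  | mk xl xr xL xR IHl IHr =>
    set X := mk xl xr xL xR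
    constructor
    · refine mk_le_mk.2 ⟨?_, nofun⟩
      rintro (i | j) h
      · exact not_add_le_add_left (not_moveRight_le (-X) i) (xL i) ((IHl i).1.trans h)
      · exact not_add_le_add_right (not_moveRight_le X j) (-xR j) ((IHr j).1.trans h)
    · refine mk_le_mk.2 ⟨nofun, ?_⟩
      rintro (j | i) h
      · exact not_add_le_add_left (not_le_moveLeft (-X) j) (xR j) (h.trans (IHr j).2)
      · exact not_add_le_add_right (not_le_moveLeft X i) (-xL i) (h.trans (IHl i).2)

theorem add_neg_add_cancel_equiv (x y : PGame.{u}) : x + -y + y ≈ x :=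
  calc x + -y + y ≈ x + (-y + y) := add_assoc_equiv x (-y) y
    _ ≈ x + (y + -y) := add_congr_right (add_comm_equiv (-y) y) x
    _ ≈ x + 0 := add_congr_right (add_neg_equiv_zero y) x
    _ ≈ x := add_zero_equiv x

theorem le_of_add_neg_le_zero {x y : PGame.{u}} (h : x + -y ≤ 0) : x ≤ y :=
  calc x ≤ x + -y + y := (add_neg_add_cancel_equiv x y).2
    _ ≤ 0 + y := PGame.add_le_add_right h y
    _ ≤ y := (add_comm_le 0 y).trans (add_zero_equiv y).1

theorem le_of_zero_le_add_neg {x y : PGame.{u}} (h : 0 ≤ x + -y) : y ≤ x :=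
  calc y ≤ 0 + y := (add_zero_equiv y).2.trans (add_comm_le y 0)
    _ ≤ x + -y + y := PGame.add_le_add_right h y
    _ ≤ x := (add_neg_add_cancel_equiv x y).1

theorem equiv_of_add_neg_equiv_zero {x y : PGame.{u}} (h : x + -y ≈ 0) : x ≈ y :=
  ⟨le_of_add_neg_le_zero h.1, le_of_zero_le_add_neg h.2⟩

end SetTheory.PGame

/-- Games `g` and `h` are equivalent (same outcome class after adding any game `x`)
iff `g + (-h)` is a second-player win, i.e. equivalent to `0`. -/
theorem equiv_iff_sub_P (g h : PGame) :
    (∀ x : PGame, ((0 : PGame) ≤ g + x ↔ (0 : PGame) ≤ h + x) ∧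
      (g + x ≤ 0 ↔ h + x ≤ 0)) ↔ g + (-h) ≈ (0 : PGame) := by
  constructor
  · intro hsame
    obtain ⟨hzero_le, hle_zero⟩ := hsame (-h)
    exact ⟨hle_zero.2 (add_neg_equiv_zero h).1, hzero_le.2 (add_neg_equiv_zero h).2⟩
  · intro hP x
    have hgx : g + x ≈ h + x := add_congr_left (equiv_of_add_neg_equiv_zero hP) x
    exact ⟨AntisymmRel.le_congr_right hgx, AntisymmRel.le_congr_left hgx⟩
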